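/- With X* and Q* as defined, MenuGap(X*,Q*) = ∞; that is, the partial sums of ∑_{(ℓ,j)} gap_{ℓ,j}/‖x_{ℓ,j}‖₁ (taken in lexicographic order of (ℓ,j), ℓ ≥ 2, 0 ≤ j ≤ n_ℓ−1) diverge to +∞. Consequently MenuGap(X*) = ∞. -/

import Mathlib

open scoped BigOperators ENNReal NNReal

noncomputable section

namespace Stmt16

/-- Valuation / allocation vectors over 2 items. -/
abbrev V2 := Fin 2 → ℝ

/-- Dot product. -/
def dot (x y : V2) : ℝ := ∑ t, x t * y t

/-- ℓ¹ norm. -/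
def norm1 (x : V2) : ℝ := ∑ t, |x t|

/-- `n_ℓ := ℓ·⌈(ln ℓ)²⌉ + 1`. -/
def nl (l : ℕ) : ℕ := l * ⌈(Real.log l) ^ 2⌉₊ + 1

/-- `θ_ℓ := π / (2(n_ℓ − 1))`. -/
def θ (l : ℕ) : ℝ := Real.pi / (2 * ((nl l : ℝ) - 1))

/-- `α := ∑_{m=2}^∞ 1/(m (ln m)²)`. -/
def α : ℝ := ∑' m : ℕ, if 2 ≤ m then 1 / (m * (Real.log m) ^ 2) else 0

/-- `δ_ℓ := 1/(α ℓ (ln ℓ)²)`. -/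
def δ (l : ℕ) : ℝ := 1 / (α * l * (Real.log l) ^ 2)

/-- `cot x := cos x / sin x`. -/
def cot (x : ℝ) : ℝ := Real.cos x / Real.sin x

/-- `z_ℓ := ∑_{m=2}^ℓ δ_m`. -/
def zl (l : ℕ) : ℝ := ∑ m ∈ Finset.Icc 2 l, δ m

/-- `z_{ℓ,j} := 1 − δ_ℓ·cot((j+1)θ_ℓ)` for `j ≤ n_ℓ − 2`, and `z_{ℓ,n_ℓ−1} := 1`. -/
def zlj (l j : ℕ) : ℝ :=
  if j = nl l - 1 then 1 else 1 - δ l * cot (((j : ℝ) + 1) * θ l)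

/-- The point `x_{ℓ,j}` of the layered construction. -/
def xstar (p : ℕ × ℕ) : V2 :=
  if Even p.1 then ![Real.cos (p.2 * θ p.1), Real.sin (p.2 * θ p.1)]
  else ![Real.sin (p.2 * θ p.1), Real.cos (p.2 * θ p.1)]

/-- Valid (layer, position) indices: `ℓ ≥ 2`, `0 ≤ j ≤ n_ℓ − 1`. -/
def validIdx (p : ℕ × ℕ) : Prop := 2 ≤ p.1 ∧ p.2 < nl p.1

/-- Lexicographic order on indices: `(ℓ',j')` comes before `(ℓ,j)`. -/
def lexBefore (p q : ℕ × ℕ) : Prop := p.1 < q.1 ∨ (p.1 = q.1 ∧ p.2 < q.2)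

/-- `Q` is the allocation sequence `Q*`: on even layers `q_{ℓ,j} = (z_ℓ, z_{ℓ,j})`;
on odd layers `q_{ℓ,j}` is a vector among `q_0 = (0,0)` and `{q_{ℓ',j'} : ℓ' < ℓ}`
maximizing `x_{ℓ,j}·q`. -/
def isQstar (Q : ℕ × ℕ → V2) : Prop :=
  (∀ p : ℕ × ℕ, validIdx p → Even p.1 → Q p = ![zl p.1, zlj p.1 p.2]) ∧
  (∀ p : ℕ × ℕ, validIdx p → ¬ Even p.1 →
    (Q p = 0 ∨ ∃ p', validIdx p' ∧ p'.1 < p.1 ∧ Q p = Q p') ∧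
    (∀ p', validIdx p' → p'.1 < p.1 → dot (xstar p) (Q p') ≤ dot (xstar p) (Q p)) ∧
    0 ≤ dot (xstar p) (Q p))

/-- `gap_{ℓ,j} := x_{ℓ,j}·q_{ℓ,j} − max_{q} x_{ℓ,j}·q`, the maximum over `q_0 = (0,0)`
and all `q_{ℓ',j'}` with `(ℓ',j')` lexicographically before `(ℓ,j)`. -/
def gapStar (Q : ℕ × ℕ → V2) (p : ℕ × ℕ) : ℝ :=
  dot (xstar p) (Q p) -
    sSup (insert (0 : ℝ)
      {y | ∃ p', validIdx p' ∧ lexBefore p' p ∧ y = dot (xstar p) (Q p')})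

/-!
Only the even layers matter. On the even layer `ℓ` the allocation `q_{ℓ,j}` beats every earlier
menu item by at least `δ_ℓ sin θ_ℓ / sin ((j+1) θ_ℓ) ≥ 2 δ_ℓ / (π (j+1))`: items of earlier
layers lose because `z_ℓ` exceeds every earlier `z_m` by at least `δ_ℓ`, earlier items of the
same layer because `cot` is decreasing. All other gaps are nonnegative, since the odd layers only
reuse earlier items. As `‖x_{ℓ,j}‖₁ ≤ 2`, the harmonic sum over `j < n_ℓ - 1` makes layer `ℓ`
contribute at least `δ_ℓ log ℓ / π = 1 / (π α ℓ log ℓ)`, and `∑ 1 / (ℓ log ℓ)` diverges while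
`∑ 1 / (ℓ log² ℓ)` (hence `α`) is finite and positive, both by Cauchy condensation.
-/

open Real Finset

theorem summable_one_div_nat_mul_log_pow_iff {p : ℕ} :
    Summable (fun n : ℕ => 1 / (n * log n ^ p)) ↔ 1 < p := by
  rw [← summable_condensed_iff_of_eventually_nonneg
    (Filter.Eventually.of_forall fun n => by positivity), ← Real.summable_one_div_nat_pow,
    ← summable_mul_left_iff (pow_ne_zero p (log_pos one_lt_two).ne')]
  · congr! 1
    funext k
    push_cast
    rw [Real.log_pow, mul_pow]
    have : log 2 ≠ 0 := (log_pos one_lt_two).ne'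
    field_simp
  · filter_upwards [Filter.eventually_ge_atTop 2] with k hk
    have hk' : (2 : ℝ) ≤ k := by exact_mod_cast hk
    have : 0 < log k := log_pos (by linarith)
    push_cast
    gcongr <;> linarith

lemma α_eq : α = ∑' m : ℕ, 1 / (m * log m ^ 2) := by
  refine tsum_congr fun m => ?_
  split_ifs with hm
  · rfl
  · interval_cases m <;> simp

lemma α_pos : 0 < α := by
  rw [α_eq]
  exact (summable_one_div_nat_mul_log_pow_iff.2 one_lt_two).tsum_pos (fun n => by positivity) 2
    (by have := log_pos (by norm_num : (1 : ℝ) < 2); positivity)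

lemma tendsto_sum_one_div_mul_log :
    Filter.Tendsto (fun K => ∑ k ∈ range K, 1 / ((k : ℝ) * log k)) Filter.atTop Filter.atTop :=
  (not_summable_iff_tendsto_nat_atTop_of_nonneg fun k => by positivity).1 fun h =>
    absurd (summable_one_div_nat_mul_log_pow_iff.1 (by simpa using h)) (lt_irrefl 1)

lemma cot_nonneg {x : ℝ} (h0 : 0 ≤ x) (h : x ≤ π / 2) : 0 ≤ cot x :=
  div_nonneg (cos_nonneg_of_mem_Icc ⟨by linarith [pi_pos], h⟩)
    (sin_nonneg_of_nonneg_of_le_pi h0 (by linarith [pi_pos]))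

lemma cot_le_cot {a b : ℝ} (ha : 0 < a) (hab : a ≤ b) (hb : b < π) : cot b ≤ cot a := by
  have hsa : 0 < sin a := sin_pos_of_pos_of_lt_pi ha (hab.trans_lt hb)
  have hsb : 0 < sin b := sin_pos_of_pos_of_lt_pi (ha.trans_le hab) hb
  have hdiff : cot a - cot b = sin (b - a) / (sin a * sin b) := by
    rw [cot, cot, sin_sub]
    field_simp
  have : 0 ≤ sin (b - a) := sin_nonneg_of_nonneg_of_le_pi (by linarith) (by linarith)
  rw [← sub_nonneg, hdiff]
  positivity

def N (l : ℕ) : ℕ := nl l - 1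

lemma nl_eq (l : ℕ) : nl l = N l + 1 := by simp [N, nl]

lemma validIdx_of_le_N {l j : ℕ} (hl : 2 ≤ l) (hj : j ≤ N l) : validIdx (l, j) :=
  ⟨hl, show j < nl l by rw [nl_eq]; omega⟩

lemma le_N {l : ℕ} (hl : 2 ≤ l) : l ≤ N l := by
  have : (1 : ℝ) < l := by exact_mod_cast hl
  have : 1 ≤ ⌈log l ^ 2⌉₊ := Nat.one_le_ceil_iff.2 (by have := log_pos this; positivity)
  simpa [N, nl] using Nat.le_mul_of_pos_right l this

lemma θ_eq (l : ℕ) : θ l = π / (2 * N l) := by simp [θ, nl_eq]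

lemma θ_pos {l : ℕ} (hl : 2 ≤ l) : 0 < θ l := by
  have : (0 : ℝ) < N l := by exact_mod_cast (by omega : 0 < 2).trans_le (hl.trans (le_N hl))
  rw [θ_eq]; positivity

lemma N_mul_θ {l : ℕ} (hl : 2 ≤ l) : N l * θ l = π / 2 := by
  have : (0 : ℝ) < N l := by exact_mod_cast (by omega : 0 < 2).trans_le (hl.trans (le_N hl))
  rw [θ_eq]; field_simp

lemma mul_θ_mem_Icc {l j : ℕ} (hl : 2 ≤ l) (hj : j ≤ N l) : j * θ l ∈ Set.Icc 0 (π / 2) :=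
  ⟨by have := θ_pos hl; positivity,
    N_mul_θ hl ▸ mul_le_mul_of_nonneg_right (by exact_mod_cast hj) (θ_pos hl).le⟩

lemma θ_le_pi_div_two {l : ℕ} (hl : 2 ≤ l) : θ l ≤ π / 2 := by
  simpa using (mul_θ_mem_Icc hl (j := 1) (by linarith [le_N hl])).2

lemma sin_θ_nonneg {l : ℕ} (hl : 2 ≤ l) : 0 ≤ sin (θ l) :=
  sin_nonneg_of_nonneg_of_le_pi (θ_pos hl).le (by linarith [θ_le_pi_div_two hl, pi_pos])

lemma sin_succ_mul_θ_pos {l j : ℕ} (hl : 2 ≤ l) (hj : j < N l) : 0 < sin ((j + 1) * θ l) := by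
  have := (mul_θ_mem_Icc hl (Nat.succ_le_of_lt hj)).2
  push_cast at this
  exact sin_pos_of_pos_of_lt_pi (mul_pos (by positivity) (θ_pos hl)) (by linarith [pi_pos])

lemma δ_nonneg (l : ℕ) : 0 ≤ δ l := by
  have := α_pos; unfold δ; positivity

lemma δ_pos {l : ℕ} (hl : 2 ≤ l) : 0 < δ l := by
  have := α_pos
  have := log_pos (by exact_mod_cast hl : (1 : ℝ) < l)
  unfold δ; positivity

lemma zl_add_δ_le {m l : ℕ} (hl : 2 ≤ l) (hml : m < l) : zl m + δ l ≤ zl l := by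
  rw [zl, zl, add_comm, ← sum_insert (by simp; omega)]
  exact sum_le_sum_of_subset_of_nonneg (by intro i; simp; omega) fun i _ _ => δ_nonneg i

lemma δ_le_zl {l : ℕ} (hl : 2 ≤ l) : δ l ≤ zl l := by
  simpa [zl] using zl_add_δ_le hl (m := 0) (by omega)

lemma zlj_of_lt {l j : ℕ} (hj : j < N l) : zlj l j = 1 - δ l * cot ((j + 1) * θ l) := by
  rw [zlj, if_neg (by rw [nl_eq]; omega)]

lemma zlj_N (l : ℕ) : zlj l (N l) = 1 := by
  simp [zlj, N]

lemma zlj_le_one {l j : ℕ} (hl : 2 ≤ l) (hj : j < nl l) : zlj l j ≤ 1 := by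
  rw [nl_eq] at hj
  obtain hj | rfl := Nat.lt_succ_iff_lt_or_eq.1 hj
  · have := mul_θ_mem_Icc hl (Nat.succ_le_of_lt hj)
    push_cast at this
    rw [zlj_of_lt hj, sub_le_self_iff]
    exact mul_nonneg (δ_nonneg l) (cot_nonneg this.1 this.2)
  · rw [zlj_N]

lemma dot_cons (a b : ℝ) (y : V2) : dot ![a, b] y = a * y 0 + b * y 1 := by
  simp [dot, Fin.sum_univ_two]

lemma xstar_of_even {l : ℕ} (he : Even l) (j : ℕ) :
    xstar (l, j) = ![cos (j * θ l), sin (j * θ l)] := by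
  simp [xstar, he]

lemma norm1_cos_sin_mem_Icc (t : ℝ) : norm1 ![cos t, sin t] ∈ Set.Icc 1 2 := by
  simp only [norm1, Fin.sum_univ_two, Matrix.cons_val_zero, Matrix.cons_val_one]
  have hc := abs_cos_le_one t
  have hs := abs_sin_le_one t
  have := sin_sq_add_cos_sq t
  constructor <;> nlinarith [sq_abs (cos t), sq_abs (sin t), abs_nonneg (cos t),
    abs_nonneg (sin t)]

section

variable {Q : ℕ × ℕ → V2}

lemma sub_le_gapStar {p : ℕ × ℕ} {b : ℝ} (hb : 0 ≤ b)
    (h : ∀ p', validIdx p' → lexBefore p' p → dot (xstar p) (Q p') ≤ b) :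
    dot (xstar p) (Q p) - b ≤ gapStar Q p := by
  have : sSup (insert (0 : ℝ)
      {y | ∃ p', validIdx p' ∧ lexBefore p' p ∧ y = dot (xstar p) (Q p')}) ≤ b :=
    Real.sSup_le (by rintro y (rfl | ⟨p', hp', hlt, rfl⟩); exacts [hb, h p' hp' hlt]) hb
  rw [gapStar]
  linarith

namespace isQstar

lemma eq_zero_or_eq_even_layer (hQ : isQstar Q) {p : ℕ × ℕ} (hp : validIdx p) :
    Q p = 0 ∨ ∃ q, validIdx q ∧ q.1 ≤ p.1 ∧ Q p = ![zl q.1, zlj q.1 q.2] := by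
  induction h : p.1 using Nat.strong_induction_on generalizing p with | _ l ih =>
  by_cases he : Even p.1
  · exact Or.inr ⟨p, hp, h.le, hQ.1 p hp he⟩
  obtain h0 | ⟨p', hp', hlt, hQp⟩ := (hQ.2 p hp he).1
  · exact Or.inl h0
  obtain h0 | ⟨q, hq, hle, hQq⟩ := ih p'.1 (h ▸ hlt) hp' rfl
  · exact Or.inl (hQp.trans h0)
  · exact Or.inr ⟨q, hq, by omega, hQp.trans hQq⟩

lemma gapStar_nonneg_of_odd (hQ : isQstar Q) {p : ℕ × ℕ} (hp : validIdx p) (ho : ¬Even p.1) :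
    0 ≤ gapStar Q p := by
  obtain ⟨-, hmax, hpos⟩ := hQ.2 p hp ho
  refine sub_self (dot (xstar p) (Q p)) ▸ sub_le_gapStar hpos fun p' hp' hlt => ?_
  obtain hlt | ⟨heq, -⟩ := hlt
  · exact hmax p' hp' hlt
  obtain h0 | ⟨p'', hp'', hlt'', hQp'⟩ := (hQ.2 p' hp' (heq ▸ ho)).1
  · simpa [h0, dot] using hpos
  · exact hQp' ▸ hmax p'' hp'' (heq ▸ hlt'')

lemma dot_le_of_even (hQ : isQstar Q) {l j : ℕ} (hl : 2 ≤ l) (he : Even l) (hj : j ≤ N l)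
    {p' : ℕ × ℕ} (hp' : validIdx p') (hlt : lexBefore p' (l, j)) :
    dot (xstar (l, j)) (Q p') ≤ cos (j * θ l) * (zl l - δ l) + sin (j * θ l) := by
  obtain ⟨hj0, hjπ⟩ := mul_θ_mem_Icc hl hj
  have hc : 0 ≤ cos (j * θ l) := cos_nonneg_of_mem_Icc ⟨by linarith [pi_pos], hjπ⟩
  have hs : 0 ≤ sin (j * θ l) := sin_nonneg_of_nonneg_of_le_pi hj0 (by linarith [pi_pos])
  have hzδ : 0 ≤ zl l - δ l := sub_nonneg.2 (δ_le_zl hl)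
  rw [xstar_of_even he, dot_cons]
  obtain hlt | ⟨heq, hlt⟩ := hlt
  · obtain h0 | ⟨q, hq, hle, hQq⟩ := hQ.eq_zero_or_eq_even_layer hp'
    · simp only [h0, Pi.zero_apply, mul_zero, add_zero]
      positivity
    · have hz : zl q.1 ≤ zl l - δ l := by linarith [zl_add_δ_le hl (hle.trans_lt hlt)]
      simp only [hQq, Matrix.cons_val_zero, Matrix.cons_val_one]
      gcongr
      exact mul_le_of_le_one_right hs (zlj_le_one hq.1 hq.2)
  · obtain ⟨l', j'⟩ := p'
    simp only at heq hlt
    subst heq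
    have hjpos : 0 < sin (j * θ l') := sin_pos_of_pos_of_lt_pi
      (mul_pos (by exact_mod_cast (by omega : 0 < j)) (θ_pos hl)) (by linarith [pi_pos])
    have hcot : cot (j * θ l') ≤ cot ((j' + 1) * θ l') := cot_le_cot
      (mul_pos (by positivity) (θ_pos hl))
      (mul_le_mul_of_nonneg_right (by exact_mod_cast hlt) (θ_pos hl).le) (by linarith [pi_pos])
    have hcs : cos (j * θ l') ≤ sin (j * θ l') * cot ((j' + 1) * θ l') := by
      calc cos (j * θ l') = sin (j * θ l') * cot (j * θ l') := by
            rw [cot]; field_simp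
        _ ≤ _ := by gcongr
    simp only [hQ.1 (l', j') hp' he, Matrix.cons_val_zero, Matrix.cons_val_one,
      zlj_of_lt (hlt.trans_le hj)]
    nlinarith [δ_nonneg l']

lemma gapStar_ge_of_even (hQ : isQstar Q) {l j : ℕ} (hl : 2 ≤ l) (he : Even l) (hj : j < N l) :
    δ l * sin (θ l) / sin ((j + 1) * θ l) ≤ gapStar Q (l, j) := by
  obtain ⟨hj0, hjπ⟩ := mul_θ_mem_Icc hl hj.le
  have hc : 0 ≤ cos (j * θ l) := cos_nonneg_of_mem_Icc ⟨by linarith [pi_pos], hjπ⟩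
  have hs : 0 ≤ sin (j * θ l) := sin_nonneg_of_nonneg_of_le_pi hj0 (by linarith [pi_pos])
  have hs1 := sin_succ_mul_θ_pos hl hj
  have hθ : sin (θ l) =
      sin ((j + 1) * θ l) * cos (j * θ l) - cos ((j + 1) * θ l) * sin (j * θ l) := by
    rw [← sin_sub]; ring_nf
  have hzδ : 0 ≤ zl l - δ l := sub_nonneg.2 (δ_le_zl hl)
  refine le_of_eq_of_le ?_ (sub_le_gapStar (by positivity) fun p' hp' hlt =>
    hQ.dot_le_of_even hl he hj.le hp' hlt)
  rw [hQ.1 (l, j) (validIdx_of_le_N hl hj.le) he, xstar_of_even he, dot_cons]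
  simp only [Matrix.cons_val_zero, Matrix.cons_val_one, zlj_of_lt hj, cot, hθ]
  field_simp
  ring

lemma gapStar_nonneg_of_even_N (hQ : isQstar Q) {l : ℕ} (hl : 2 ≤ l) (he : Even l) :
    0 ≤ gapStar Q (l, N l) := by
  have h := sub_le_gapStar (Q := Q) zero_le_one fun p' hp' hlt => by
    simpa [N_mul_θ hl] using hQ.dot_le_of_even hl he le_rfl hp' hlt
  simpa [hQ.1 (l, N l) (validIdx_of_le_N hl le_rfl) he, xstar_of_even he, dot_cons,
    N_mul_θ hl, zlj_N] using h

lemma gapStar_nonneg (hQ : isQstar Q) {p : ℕ × ℕ} (hp : validIdx p) : 0 ≤ gapStar Q p := by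
  obtain ⟨l, j⟩ := p
  obtain ⟨hl, hj⟩ : 2 ≤ l ∧ j < nl l := hp
  by_cases he : Even l
  · rw [nl_eq] at hj
    obtain hj | rfl := Nat.lt_succ_iff_lt_or_eq.1 hj
    · have := sin_succ_mul_θ_pos hl hj
      have := sin_θ_nonneg hl
      have := δ_nonneg l
      exact le_trans (by positivity) (hQ.gapStar_ge_of_even hl he hj)
    · exact hQ.gapStar_nonneg_of_even_N hl he
  · exact hQ.gapStar_nonneg_of_odd ⟨hl, hj⟩ he

lemma div_pi_mul_succ_le (hQ : isQstar Q) {l j : ℕ} (hl : 2 ≤ l) (he : Even l) (hj : j < N l) :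
    δ l / (π * (j + 1)) ≤ gapStar Q (l, j) / norm1 (xstar (l, j)) := by
  have hθ := θ_pos hl
  have hs1 := sin_succ_mul_θ_pos hl hj
  have hδ := δ_pos hl
  obtain ⟨hn1, hn2⟩ := norm1_cos_sin_mem_Icc (j * θ l)
  rw [← xstar_of_even he] at hn1 hn2
  calc δ l / (π * (j + 1)) = δ l * (2 / π * θ l) / ((j + 1) * θ l) / 2 := by
        field_simp
    _ ≤ δ l * sin (θ l) / sin ((j + 1) * θ l) / 2 := by
        gcongr
        · exact mul_nonneg hδ.le (sin_θ_nonneg hl)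
        · exact mul_le_sin hθ.le (θ_le_pi_div_two hl)
        · exact sin_le (by positivity)
    _ ≤ gapStar Q (l, j) / 2 := by gcongr; exact hQ.gapStar_ge_of_even hl he hj
    _ ≤ gapStar Q (l, j) / norm1 (xstar (l, j)) :=
        div_le_div_of_nonneg_left (hQ.gapStar_nonneg (validIdx_of_le_N hl hj.le))
          (by linarith) hn2

lemma one_div_mul_log_le_sum_layer (hQ : isQstar Q) {l : ℕ} (hl : 2 ≤ l) (he : Even l) :
    1 / (π * α * (l * log l)) ≤ ∑ j ∈ range (N l), gapStar Q (l, j) / norm1 (xstar (l, j)) := by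
  have := α_pos
  have hlog := log_pos (by exact_mod_cast hl : (1 : ℝ) < l)
  have := δ_nonneg l
  calc 1 / (π * α * (l * log l)) = δ l / π * log l := by
        rw [δ]; field_simp
    _ ≤ δ l / π * log ↑(N l + 1) := by
        gcongr
        exact_mod_cast (le_N hl).trans (Nat.le_succ _)
    _ ≤ δ l / π * harmonic (N l) := by
        gcongr
        exact log_add_one_le_harmonic _
    _ = ∑ j ∈ range (N l), δ l / (π * (j + 1)) := by
        simp only [harmonic, Rat.cast_sum, mul_sum]
        refine sum_congr rfl fun j _ => ?_
        push_cast
        field_simp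
    _ ≤ _ := sum_le_sum fun j hj => hQ.div_pi_mul_succ_le hl he (mem_range.1 hj)

end isQstar

def evenLayersBelow (K : ℕ) : Finset (ℕ × ℕ) :=
  (Ico 2 K).biUnion fun k => (range (N (2 * k))).map (Function.Embedding.sectR (2 * k) ℕ)

lemma validIdx_of_mem_evenLayersBelow {K : ℕ} {q : ℕ × ℕ} (hq : q ∈ evenLayersBelow K) :
    validIdx q ∧ q.1 < 2 * K := by
  simp only [evenLayersBelow, mem_biUnion, mem_Ico, mem_map, mem_range,
    Function.Embedding.sectR_apply] at hq
  obtain ⟨k, ⟨hk, hkK⟩, j, hj, rfl⟩ := hq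
  exact ⟨validIdx_of_le_N (by omega) hj.le, by simp; omega⟩

lemma isQstar.sum_one_div_mul_log_le (hQ : isQstar Q) (K : ℕ) :
    ∑ k ∈ range K, 1 / (4 * π * α) * (1 / (k * log k))
      ≤ ∑ q ∈ evenLayersBelow K, gapStar Q q / norm1 (xstar q) := by
  have := α_pos
  calc ∑ k ∈ range K, 1 / (4 * π * α) * (1 / (k * log k))
      = ∑ k ∈ Ico 2 K, 1 / (4 * π * α) * (1 / (k * log k)) := by
        refine (sum_subset (fun k hk => mem_range.2 (mem_Ico.1 hk).2) fun k hk hk' => ?_).symm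
        have : k < 2 := by simp_all
        interval_cases k <;> simp
    _ ≤ ∑ k ∈ Ico 2 K, ∑ j ∈ range (N (2 * k)),
          gapStar Q (2 * k, j) / norm1 (xstar (2 * k, j)) := by
        refine sum_le_sum fun k hk => le_trans ?_
          (hQ.one_div_mul_log_le_sum_layer (by simp at hk; omega) (even_two_mul k))
        have hk : (2 : ℝ) ≤ k := by exact_mod_cast (mem_Ico.1 hk).1
        have hlog2 : log 2 ≤ log k := log_le_log two_pos hk
        have hlog : 0 < log 2 := log_pos one_lt_two
        rw [one_div_mul_one_div]
        push_cast
        rw [log_mul two_ne_zero (by positivity)]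
        have key : 2 * k * (log 2 + log k) ≤ 4 * (k * log k) := by nlinarith
        refine one_div_le_one_div_of_le (mul_pos (mul_pos pi_pos α_pos) (by nlinarith)) ?_
        calc π * α * (2 * k * (log 2 + log k)) ≤ π * α * (4 * (k * log k)) := by gcongr
          _ = 4 * π * α * (k * log k) := by ring
    _ = _ := by
        rw [evenLayersBelow, sum_biUnion]
        · simp [sum_map]
        · intro a _ b _ hab
          simp only [Function.onFun, disjoint_left, mem_map, mem_range,
            Function.Embedding.sectR_apply]
          rintro _ ⟨j, -, rfl⟩ ⟨j', -, h⟩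
          exact hab (by simp at h; omega)

lemma finite_setOf_validIdx_lexBefore (p : ℕ × ℕ) : {q : ℕ × ℕ | validIdx q ∧ lexBefore q p}.Finite := by
  refine ((Set.finite_Iic p.1).biUnion fun l _ =>
    (Set.finite_singleton l).prod (Set.finite_Iio (nl l))).subset ?_
  rintro ⟨l, j⟩ ⟨⟨-, hj⟩, hlt⟩
  simp only [Set.mem_iUnion, Set.mem_Iic, Set.mem_prod, Set.mem_singleton_iff, Set.mem_Iio]
  exact ⟨l, by rcases hlt with h | ⟨h, -⟩ <;> simp at h <;> omega, rfl, hj⟩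

lemma isQstar.sum_le_finsum_of_lexBefore (hQ : isQstar Q) {E : Finset (ℕ × ℕ)} {p : ℕ × ℕ}
    (hE : ∀ q ∈ E, validIdx q ∧ lexBefore q p) :
    ∑ q ∈ E, gapStar Q q / norm1 (xstar q)
      ≤ ∑ᶠ q ∈ {q : ℕ × ℕ | validIdx q ∧ lexBefore q p}, gapStar Q q / norm1 (xstar q) := by
  rw [finsum_mem_eq_finite_toFinset_sum _ (finite_setOf_validIdx_lexBefore p)]
  refine sum_le_sum_of_subset_of_nonneg (fun q hq => by simpa using hE q hq) fun q hq _ => ?_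
  rw [Set.Finite.mem_toFinset] at hq
  exact div_nonneg (hQ.gapStar_nonneg hq.1) (sum_nonneg fun _ _ => abs_nonneg _)

end

/-- `MenuGap(X*,Q*) = ∞`: the partial sums of `∑ gap_{ℓ,j}/‖x_{ℓ,j}‖₁`, taken in
lexicographic order of `(ℓ,j)`, diverge to `+∞`; in particular `MenuGap(X*) = ∞`. -/
theorem stmt16 (Q : ℕ × ℕ → V2) (hQ : isQstar Q) :
    ∀ T : ℝ, ∃ p₀ : ℕ × ℕ, ∀ p : ℕ × ℕ, lexBefore p₀ p →
      T ≤ ∑ᶠ p' ∈ {p' : ℕ × ℕ | validIdx p' ∧ lexBefore p' p},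
        gapStar Q p' / norm1 (xstar p') := by
  intro T
  have hc : 0 < 4 * π * α := by have := α_pos; positivity
  obtain ⟨K, hK⟩ := (tendsto_sum_one_div_mul_log.eventually_ge_atTop (4 * π * α * T)).exists
  refine ⟨(2 * K, 0), fun p hp => ?_⟩
  calc T ≤ ∑ k ∈ range K, 1 / (4 * π * α) * (1 / (k * log k)) := by
        rwa [← mul_sum, one_div_mul_eq_div, le_div_iff₀' hc]
    _ ≤ ∑ q ∈ evenLayersBelow K, gapStar Q q / norm1 (xstar q) := hQ.sum_one_div_mul_log_le K
    _ ≤ _ := hQ.sum_le_finsum_of_lexBefore fun q hq => by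
        obtain ⟨hq, hqK⟩ := validIdx_of_mem_evenLayersBelow hq
        exact ⟨hq, Or.inl (by rcases hp with h | ⟨h, -⟩ <;> simp at h <;> omega)⟩

end Stmt16
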